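/- Assume supp(ν) ⊂ U_ν. For every t ∈ ℝ \ (closure(U_ν) ∪ Θ): for all N large enough v_N(t) = 0 and Ψ_N(t) = H_N(t) = t + ∫ dμ_{A_N}(x)/(t−x), and Ψ_N(t) converges to Ψ_ν(t) = H_ν(t) as N → ∞. -/

import Mathlib

/-!
Since `t` is at positive distance from `U_ν ⊇ supp ν`, `v_ν` vanishes at `t` and at `t ± c` for
some `c > 0`; letting `v → 0` in `∫ dν(x) / ((s - x)² + v²) ≤ 1` gives `∫ (s - x)⁻² dν ≤ 1` for
`s = t ± c`, and strict convexity of `y ↦ y⁻²` makes the bound at `t` strict. Away from `t` the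
integrands `(t - x)⁻¹` and `(t - x)⁻²` agree with bounded continuous functions, the bulk eigenvalues
eventually stay away from `t`, and the spikes carry mass `r / N`; so weak convergence gives
`∫ (t - x)⁻ⁿ dμ_N → ∫ (t - x)⁻ⁿ dν`. Hence eventually `∫ (t - x)⁻² dμ_N < 1`, i.e. `v_N(t) = 0`
and `Ψ_N(t) = H_N(t)`, and `H_N(t) → H_ν(t) = Ψ_ν(t)`.
-/

open MeasureTheory Filter Topology Set
open scoped ENNReal

/-- `v_μ(u) = inf {v ≥ 0 : ∫ dμ(x)/((u−x)² + v²) ≤ 1}`. -/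
noncomputable def vF (μ : Measure ℝ) (u : ℝ) : ℝ :=
  sInf {v : ℝ | 0 ≤ v ∧ ∫ x, ((u - x) ^ 2 + v ^ 2)⁻¹ ∂μ ≤ 1}

/-- `U_μ = {t : v_μ(t) > 0}`. -/
def USet (μ : Measure ℝ) : Set ℝ := {t | 0 < vF μ t}

/-- `H_μ(z) = z + ∫ dμ(x)/(z−x)`. -/
noncomputable def HF (μ : Measure ℝ) (z : ℝ) : ℝ := z + ∫ x, (z - x)⁻¹ ∂μ

/-- `Ψ_μ(t) = t + ∫ (t−x) dμ(x)/((t−x)² + v_μ(t)²)`. -/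
noncomputable def PsiF (μ : Measure ℝ) (t : ℝ) : ℝ :=
  t + ∫ x, (t - x) / ((t - x) ^ 2 + vF μ t ^ 2) ∂μ

/-- The (topological) support of a measure on ℝ. -/
def MeasSupp (μ : Measure ℝ) : Set ℝ := {x | ∀ U ∈ nhds x, μ U ≠ 0}

/-- `ν̂_N = (1/(N−r)) Σ_{j=1}^{N−r} δ_{β_j(N)}`. -/
noncomputable def hatNu (r : ℕ) (β : ℕ → ℕ → ℝ) (N : ℕ) : Measure ℝ :=
  ((N - r : ℕ) : ℝ≥0∞)⁻¹ • ∑ i ∈ Finset.range (N - r), Measure.dirac (β N i)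

open scoped BoundedContinuousFunction

lemma inv_sq_lt_avg_inv_sq {a δ : ℝ} (hδ : 0 < δ) (h : δ < |a|) :
    (a ^ 2)⁻¹ < (((a - δ) ^ 2)⁻¹ + ((a + δ) ^ 2)⁻¹) / 2 := by
  have hgap : 0 < a ^ 2 - δ ^ 2 := sub_pos.2 (sq_lt_sq.2 (by rwa [abs_of_pos hδ]))
  have ha : a ≠ 0 := by rintro rfl; nlinarith
  have hm : a - δ ≠ 0 := fun h0 => by nlinarith
  have hp : a + δ ≠ 0 := fun h0 => by nlinarith
  have key : (((a - δ) ^ 2)⁻¹ + ((a + δ) ^ 2)⁻¹) / 2 - (a ^ 2)⁻¹ =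
      δ ^ 2 * (3 * a ^ 2 - δ ^ 2) / (a ^ 2 * (a ^ 2 - δ ^ 2) ^ 2) := by
    field_simp
    ring
  have : 0 < 3 * a ^ 2 - δ ^ 2 := by nlinarith
  rw [← sub_pos, key]
  positivity

lemma inv_sq_add_sq_le_inv_sq {y v m : ℝ} (hm : 0 < m) (hy : m ≤ |y|) :
    (y ^ 2 + v ^ 2)⁻¹ ≤ (m ^ 2)⁻¹ := by
  have hsq : m ^ 2 ≤ y ^ 2 := by simpa using pow_le_pow_left₀ hm.le hy 2
  exact inv_anti₀ (by positivity) (hsq.trans (le_add_of_nonneg_right (sq_nonneg v)))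

lemma integral_lt_integral_of_ae_lt {α : Type*} [MeasurableSpace α] {μ : Measure α} [NeZero μ]
    {f g : α → ℝ} (hf : Integrable f μ) (hg : Integrable g μ) (hfg : ∀ᵐ x ∂μ, f x < g x) :
    ∫ x, f x ∂μ < ∫ x, g x ∂μ := by
  have hpos : ∀ᵐ x ∂μ, 0 < (g - f) x := hfg.mono fun x hx => sub_pos.2 hx
  have hsupp : 0 < μ (Function.support (g - f)) := by
    refine pos_iff_ne_zero.2 fun h0 => ?_
    obtain ⟨x, hx, hx0⟩ := (hpos.and (measure_eq_zero_iff_ae_notMem.1 h0)).exists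
    exact hx0 hx.ne'
  have := (integral_pos_iff_support_of_nonneg_ae (hpos.mono fun _ hx => hx.le) (hg.sub hf)).2 hsupp
  rwa [Pi.sub_def, integral_sub hg hf, sub_pos] at this

lemma vF_nonneg (μ : Measure ℝ) (u : ℝ) : 0 ≤ vF μ u :=
  Real.sInf_nonneg fun _ hv => hv.1

section vF

variable {μ : Measure ℝ} {u : ℝ}

lemma vF_eq_zero_of_notMem_USet (hu : u ∉ USet μ) : vF μ u = 0 :=
  le_antisymm (not_lt.mp hu) (vF_nonneg μ u)

lemma vF_eq_zero_of_integral_inv_sq_le_one (h : ∫ x, ((u - x) ^ 2)⁻¹ ∂μ ≤ 1) : vF μ u = 0 :=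
  le_antisymm (csInf_le ⟨0, fun _ hv => hv.1⟩ ⟨le_rfl, by simpa using h⟩) (vF_nonneg μ u)

lemma PsiF_eq_HF_of_vF_eq_zero (h : vF μ u = 0) : PsiF μ u = HF μ u := by
  simp only [PsiF, HF, h, zero_pow two_ne_zero, add_zero]
  simp only [sq, div_self_mul_self']

variable {m : ℝ}

lemma integrable_inv_sq_add_sq [IsFiniteMeasure μ] (hm : 0 < m) (hdist : ∀ᵐ x ∂μ, m ≤ |u - x|)
    (v : ℝ) : Integrable (fun x => ((u - x) ^ 2 + v ^ 2)⁻¹) μ :=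
  (integrable_const (m ^ 2)⁻¹).mono' (by fun_prop) <| hdist.mono fun x hx => by
    rw [Real.norm_of_nonneg (by positivity)]
    exact inv_sq_add_sq_le_inv_sq hm hx

lemma integral_inv_sq_add_sq_le_one_of_vF_lt [IsProbabilityMeasure μ] (hm : 0 < m)
    (hdist : ∀ᵐ x ∂μ, m ≤ |u - x|) {v : ℝ} (hv : vF μ u < v) :
    ∫ x, ((u - x) ^ 2 + v ^ 2)⁻¹ ∂μ ≤ 1 := by
  have hone : ∫ x, ((u - x) ^ 2 + 1 ^ 2)⁻¹ ∂μ ≤ 1 := by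
    calc ∫ x, ((u - x) ^ 2 + 1 ^ 2)⁻¹ ∂μ ≤ ∫ _, (1 : ℝ) ∂μ :=
          integral_mono (integrable_inv_sq_add_sq hm hdist 1) (integrable_const 1) fun x =>
            inv_le_one_of_one_le₀ (by nlinarith [sq_nonneg (u - x)])
      _ = 1 := by simp
  obtain ⟨w, ⟨hw0, hw⟩, hwv⟩ := exists_lt_of_csInf_lt (by exact ⟨1, zero_le_one, hone⟩) hv
  refine le_trans (integral_mono_ae (integrable_inv_sq_add_sq hm hdist v)
    (integrable_inv_sq_add_sq hm hdist w) (hdist.mono fun x hx => ?_)) hw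
  have : 0 < (u - x) ^ 2 := by nlinarith [sq_abs (u - x)]
  exact inv_anti₀ (by positivity) (by nlinarith)

lemma integral_inv_sq_le_one_of_notMem_USet [IsProbabilityMeasure μ] (hu : u ∉ USet μ)
    (hm : 0 < m) (hdist : ∀ᵐ x ∂μ, m ≤ |u - x|) : ∫ x, ((u - x) ^ 2)⁻¹ ∂μ ≤ 1 := by
  have hcont : Continuous fun v : ℝ => ∫ x, ((u - x) ^ 2 + v ^ 2)⁻¹ ∂μ := by
    refine continuous_of_dominated (bound := fun _ => (m ^ 2)⁻¹) (fun v => by fun_prop)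
      (fun v => hdist.mono fun x hx => ?_) (integrable_const _) (hdist.mono fun x hx => ?_)
    · rw [Real.norm_of_nonneg (by positivity)]
      exact inv_sq_add_sq_le_inv_sq hm hx
    · have : 0 < (u - x) ^ 2 := by nlinarith [sq_abs (u - x)]
      exact (continuous_const.add (continuous_pow 2)).inv₀ fun v =>
        (add_pos_of_pos_of_nonneg this (sq_nonneg v)).ne'
  have hlim := (hcont.tendsto 0).mono_left (nhdsWithin_le_nhds (s := Ioi 0))
  simpa using le_of_tendsto hlim <| eventually_nhdsWithin_of_forall fun v hv =>
    integral_inv_sq_add_sq_le_one_of_vF_lt hm hdist ((vF_eq_zero_of_notMem_USet hu).trans_lt hv)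

lemma integral_inv_sq_lt_one [IsProbabilityMeasure μ] {c : ℝ} (hc : 0 < c)
    (hdist : ∀ᵐ x ∂μ, 2 * c ≤ |u - x|) (hl : u - c ∉ USet μ) (hr : u + c ∉ USet μ) :
    ∫ x, ((u - x) ^ 2)⁻¹ ∂μ < 1 := by
  have hdistl : ∀ᵐ x ∂μ, c ≤ |u - c - x| := hdist.mono fun x hx => by
    have := abs_sub_abs_le_abs_sub (u - x) (u - c - x)
    rw [show u - x - (u - c - x) = c by ring, abs_of_pos hc] at this
    linarith
  have hdistr : ∀ᵐ x ∂μ, c ≤ |u + c - x| := hdist.mono fun x hx => by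
    have := abs_sub_abs_le_abs_sub (u - x) (u + c - x)
    rw [show u - x - (u + c - x) = -c by ring, abs_neg, abs_of_pos hc] at this
    linarith
  have hintl := integrable_inv_sq_add_sq hc hdistl 0
  have hintr := integrable_inv_sq_add_sq hc hdistr 0
  simp only [zero_pow two_ne_zero, add_zero] at hintl hintr
  calc ∫ x, ((u - x) ^ 2)⁻¹ ∂μ
      < ∫ x, (((u - c - x) ^ 2)⁻¹ + ((u + c - x) ^ 2)⁻¹) / 2 ∂μ := by
        refine integral_lt_integral_of_ae_lt ?_ ((hintl.add hintr).div_const 2)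
          (hdist.mono fun x hx => ?_)
        · simpa using integrable_inv_sq_add_sq (by positivity) hdist 0
        · rw [sub_right_comm, add_sub_right_comm]
          exact inv_sq_lt_avg_inv_sq hc (by linarith)
    _ = (∫ x, ((u - c - x) ^ 2)⁻¹ ∂μ + ∫ x, ((u + c - x) ^ 2)⁻¹ ∂μ) / 2 := by
        rw [integral_div, integral_add hintl hintr]
    _ ≤ 1 := by
        linarith [integral_inv_sq_le_one_of_notMem_USet hl hc hdistl,
          integral_inv_sq_le_one_of_notMem_USet hr hc hdistr]

end vF

lemma exists_pos_two_mul_le_abs_sub_of_notMem_closure {s : Set ℝ} {t : ℝ} (ht : t ∉ closure s) :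
    ∃ c > 0, t - c ∉ s ∧ t + c ∉ s ∧ ∀ x ∈ s, 2 * c ≤ |t - x| := by
  obtain ⟨ε, hε, hfar⟩ : ∃ ε > 0, ∀ x ∈ s, ε ≤ |t - x| := by
    simpa [Metric.mem_closure_iff, Real.dist_eq] using ht
  refine ⟨ε / 2, half_pos hε, fun h => ?_, fun h => ?_, fun x hx => by linarith [hfar x hx]⟩
  · have := hfar _ h
    rw [sub_sub_cancel, abs_of_pos (half_pos hε)] at this
    linarith
  · have := hfar _ h
    rw [sub_add_cancel_left, abs_neg, abs_of_pos (half_pos hε)] at this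
    linarith

lemma le_abs_sub_of_infDist_lt {K : Set ℝ} (hK : K.Nonempty) {t c b : ℝ}
    (hfar : ∀ x ∈ K, 2 * c ≤ |t - x|) (hb : Metric.infDist b K < c) : c ≤ |t - b| := by
  obtain ⟨y, hy, hyb⟩ := (Metric.infDist_lt_iff hK).1 hb
  rw [Real.dist_eq] at hyb
  linarith [hfar y hy, abs_sub_le t b y]

lemma MeasSupp_eq_support (μ : Measure ℝ) : MeasSupp μ = μ.support := by
  ext x
  simp [MeasSupp, Measure.mem_support_iff_forall, pos_iff_ne_zero]

lemma exists_boundedContinuous_eqOn_inv_pow (t : ℝ) {c : ℝ} (hc : 0 < c) (n : ℕ) :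
    ∃ g : ℝ →ᵇ ℝ, EqOn (fun x => ((t - x) ^ n)⁻¹) g {x | c ≤ |t - x|} := by
  have hM : ∀ x, 0 < max |t - x| c := fun x => lt_max_of_lt_right hc
  have hcont : Continuous fun x => (t - x) ^ n / max |t - x| c ^ (2 * n) :=
    (by fun_prop : Continuous fun x => (t - x) ^ n).div (by fun_prop)
      fun x => (pow_pos (hM x) _).ne'
  have hbound : ∀ x, ‖(t - x) ^ n / max |t - x| c ^ (2 * n)‖ ≤ c⁻¹ ^ n := fun x => by
    have hle : |t - x| / max |t - x| c ^ 2 ≤ c⁻¹ :=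
      calc |t - x| / max |t - x| c ^ 2 ≤ max |t - x| c / max |t - x| c ^ 2 := by
            gcongr; exact le_max_left _ _
        _ = (max |t - x| c)⁻¹ := by rw [sq, div_self_mul_self']
        _ ≤ c⁻¹ := inv_anti₀ hc (le_max_right _ _)
    rw [norm_div, norm_pow, norm_pow, Real.norm_eq_abs, Real.norm_of_nonneg (hM x).le, pow_mul,
      ← div_pow]
    exact pow_le_pow_left₀ (by positivity) hle n
  refine ⟨.ofNormedAddCommGroup _ hcont _ hbound, fun x (hx : c ≤ |t - x|) => ?_⟩
  change ((t - x) ^ n)⁻¹ = (t - x) ^ n / max |t - x| c ^ (2 * n)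
  rw [max_eq_left hx, pow_mul, sq_abs, pow_right_comm, sq, div_self_mul_self']

lemma integral_inv_smul_sum_dirac_add_sum_dirac {J : ℕ} (N n : ℕ) (θ : Fin J → ℝ)
    (k : Fin J → ℕ) (b : ℕ → ℝ) (f : ℝ → ℝ) :
    ∫ x, f x ∂((N : ℝ≥0∞)⁻¹ • ((∑ j, (k j : ℝ≥0∞) • Measure.dirac (θ j)) +
        ∑ i ∈ Finset.range n, Measure.dirac (b i))) =
      (N : ℝ)⁻¹ * ((∑ j, (k j : ℝ) * f (θ j)) + ∑ i ∈ Finset.range n, f (b i)) := by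
  have hdirac : ∀ a, Integrable f (Measure.dirac a) := fun a => integrable_dirac enorm_lt_top
  have hθ : ∀ j ∈ Finset.univ, Integrable f ((k j : ℝ≥0∞) • Measure.dirac (θ j)) :=
    fun j _ => (hdirac _).smul_measure ENNReal.coe_ne_top
  have hb : ∀ i ∈ Finset.range n, Integrable f (Measure.dirac (b i)) := fun i _ => hdirac _
  rw [integral_smul_measure, integral_add_measure (integrable_finsetSum_measure.2 hθ)
      (integrable_finsetSum_measure.2 hb), integral_finsetSum_measure hθ,
    integral_finsetSum_measure hb]
  simp [integral_smul_measure, ENNReal.toReal_inv]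

lemma tendsto_integral_of_eqOn_boundedContinuous {ν : Measure ℝ} {J r : ℕ} {θ : Fin J → ℝ}
    {k : Fin J → ℕ} {β : ℕ → ℕ → ℝ} {μA : ℕ → Measure ℝ}
    (hdecomp : ∀ N, r ≤ N → μA N = (N : ℝ≥0∞)⁻¹ •
      ((∑ j, (k j : ℝ≥0∞) • Measure.dirac (θ j)) +
        ∑ i ∈ Finset.range (N - r), Measure.dirac (β N i)))
    (hweak : ∀ f : ℝ →ᵇ ℝ, Tendsto (fun N => ∫ x, f x ∂(μA N)) atTop (𝓝 (∫ x, f x ∂ν)))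
    {S : Set ℝ} {f : ℝ → ℝ} (g : ℝ →ᵇ ℝ) (hfg : EqOn f g S)
    (hβS : ∀ᶠ N in atTop, ∀ i ∈ Finset.range (N - r), β N i ∈ S) (hνS : ∀ᵐ x ∂ν, x ∈ S) :
    Tendsto (fun N => ∫ x, f x ∂(μA N)) atTop (𝓝 (∫ x, f x ∂ν)) := by
  -- eventually only the spikes, of total mass `r / N`, see the difference between `f` and `g`
  set C := ∑ j, (k j : ℝ) * (f (θ j) - g (θ j))
  have hlim : Tendsto (fun N : ℕ => ∫ x, g x ∂(μA N) + (N : ℝ)⁻¹ * C) atTop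
      (𝓝 (∫ x, f x ∂ν)) := by
    rw [integral_congr_ae (hνS.mono fun x hx => hfg hx), ← add_zero (∫ x, g x ∂ν), ← zero_mul C]
    exact (hweak g).add (tendsto_inv_atTop_nhds_zero_nat.mul_const C)
  refine hlim.congr' ?_
  filter_upwards [eventually_ge_atTop r, hβS] with N hN hβN
  rw [hdecomp N hN, integral_inv_smul_sum_dirac_add_sum_dirac,
    integral_inv_smul_sum_dirac_add_sum_dirac, Finset.sum_congr rfl fun i hi => hfg (hβN i hi)]
  simp only [C, mul_sub, Finset.sum_sub_distrib]
  ring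

theorem stmt9_general
    (ν : Measure ℝ) [IsProbabilityMeasure ν]
    (J r : ℕ) (θ : Fin J → ℝ) (k : Fin J → ℕ)
    (β : ℕ → ℕ → ℝ) (μA : ℕ → Measure ℝ)
    (hdecomp : ∀ N, r ≤ N → μA N = (N : ℝ≥0∞)⁻¹ •
      ((∑ j, (k j : ℝ≥0∞) • Measure.dirac (θ j)) +
        ∑ i ∈ Finset.range (N - r), Measure.dirac (β N i)))
    (hweak : ∀ f : BoundedContinuousFunction ℝ ℝ,
      Tendsto (fun N => ∫ x, f x ∂(μA N)) atTop (𝓝 (∫ x, f x ∂ν)))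
    (hβ : ∀ ε > 0, ∀ᶠ N in atTop, ∀ i ∈ Finset.range (N - r),
      Metric.infDist (β N i) (MeasSupp ν) < ε)
    (hsuppU : MeasSupp ν ⊆ USet ν)
    (t : ℝ) (ht : t ∉ closure (USet ν) ∪ Set.range θ) :
    (∀ᶠ N in atTop, vF (μA N) t = 0 ∧
      PsiF (μA N) t = HF (μA N) t ∧ HF (μA N) t = t + ∫ x, (t - x)⁻¹ ∂(μA N)) ∧
    PsiF ν t = HF ν t ∧
    Tendsto (fun N => PsiF (μA N) t) atTop (𝓝 (PsiF ν t)) := by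
  have htU : t ∉ closure (USet ν) := fun h => ht (Or.inl h)
  rw [MeasSupp_eq_support] at hβ hsuppU
  obtain ⟨c, hc, hl, hr, hfar⟩ := exists_pos_two_mul_le_abs_sub_of_notMem_closure htU
  have hsupp_far : ∀ x ∈ ν.support, 2 * c ≤ |t - x| := fun x hx => hfar x (hsuppU hx)
  have hνfar : ∀ᵐ x ∂ν, 2 * c ≤ |t - x| := Filter.mem_of_superset Measure.support_mem_ae hsupp_far
  have hβfar : ∀ᶠ N in atTop, ∀ i ∈ Finset.range (N - r), β N i ∈ {x | c ≤ |t - x|} :=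
    (hβ c hc).mono fun N hN i hi =>
      le_abs_sub_of_infDist_lt (Measure.nonempty_support (NeZero.ne ν)) hsupp_far (hN i hi)
  have hlim : ∀ n : ℕ, Tendsto (fun N => ∫ x, ((t - x) ^ n)⁻¹ ∂(μA N)) atTop
      (𝓝 (∫ x, ((t - x) ^ n)⁻¹ ∂ν)) := fun n => by
    obtain ⟨g, hg⟩ := exists_boundedContinuous_eqOn_inv_pow t hc n
    exact tendsto_integral_of_eqOn_boundedContinuous hdecomp hweak g hg hβfar
      (hνfar.mono fun x hx => by show c ≤ |t - x|; linarith)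
  have hv : ∀ᶠ N in atTop, vF (μA N) t = 0 :=
    ((hlim 2).eventually_lt_const (integral_inv_sq_lt_one hc hνfar hl hr)).mono
      fun N hN => vF_eq_zero_of_integral_inv_sq_le_one hN.le
  have hPsi : PsiF ν t = HF ν t :=
    PsiF_eq_HF_of_vF_eq_zero (vF_eq_zero_of_notMem_USet fun h => htU (subset_closure h))
  refine ⟨hv.mono fun N hN => ⟨hN, PsiF_eq_HF_of_vF_eq_zero hN, rfl⟩, hPsi, ?_⟩
  rw [hPsi]
  exact (tendsto_const_nhds.add (by simpa using hlim 1)).congr'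
    (hv.mono fun N hN => (PsiF_eq_HF_of_vF_eq_zero hN).symm)

/-- assume `supp(ν) ⊆ U_ν`.  For `t ∉ closure(U_ν) ∪ Θ`: for all large `N`,
`v_N(t) = 0` and `Ψ_N(t) = H_N(t) = t + ∫ dμ_{A_N}(x)/(t−x)`, and `Ψ_N(t) → Ψ_ν(t) = H_ν(t)`. -/
theorem stmt9
    (ν : Measure ℝ) [IsProbabilityMeasure ν] (hcomp : IsCompact (MeasSupp ν))
    (J r : ℕ) (θ : Fin J → ℝ) (k : Fin J → ℕ)
    (hθanti : StrictAnti θ) (hθsupp : ∀ j, θ j ∉ MeasSupp ν)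
    (hkpos : ∀ j, 0 < k j) (hkr : ∑ j, k j = r)
    (β : ℕ → ℕ → ℝ) (μA : ℕ → Measure ℝ)
    (hprob : ∀ N, IsProbabilityMeasure (μA N))
    (hdecomp : ∀ N, r ≤ N → μA N = (N : ℝ≥0∞)⁻¹ •
      ((∑ j, (k j : ℝ≥0∞) • Measure.dirac (θ j)) +
        ∑ i ∈ Finset.range (N - r), Measure.dirac (β N i)))
    (hweak : ∀ f : BoundedContinuousFunction ℝ ℝ,
      Tendsto (fun N => ∫ x, f x ∂(μA N)) atTop (𝓝 (∫ x, f x ∂ν)))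
    (hβ : ∀ ε > 0, ∀ᶠ N in atTop, ∀ i ∈ Finset.range (N - r),
      Metric.infDist (β N i) (MeasSupp ν) < ε)
    (hsuppU : MeasSupp ν ⊆ USet ν)
    (t : ℝ) (ht : t ∉ closure (USet ν) ∪ Set.range θ) :
    (∀ᶠ N in atTop, vF (μA N) t = 0 ∧
      PsiF (μA N) t = HF (μA N) t ∧ HF (μA N) t = t + ∫ x, (t - x)⁻¹ ∂(μA N)) ∧
    PsiF ν t = HF ν t ∧
    Tendsto (fun N => PsiF (μA N) t) atTop (𝓝 (PsiF ν t)) :=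
  stmt9_general ν J r θ k β μA hdecomp hweak hβ hsuppU t ht
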